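/- arXiv:2106.09123 — 13 statements merged into one kernel-verified Lean document; each statement's English description precedes it below -/
import Mathlib

section
/- For every real number a > 0 and every real number x > 0, the integral over t from -1 to 1 of a·(t+1)^{a-1}·(x-1) / (2^a + (t+1)^a·(x-1)) dt equals log x (here the denominator 2^a + (t+1)^a·(x-1) is strictly positive for all t ∈ [-1,1] when x > 0). -/
/-!
The integrand is the logarithmic derivative of `D(t) = 2^a + (t+1)^a (x-1)`, which stays positive
on `[-1, 1]` because it interpolates between `D(-1) = 2^a` and `D(1) = 2^a x`. Hence the integral
is `log D(1) - log D(-1) = log (2^a x) - log 2^a = log x`; the singularity of `(t+1)^(a-1)` at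
`t = -1` is integrable since `a - 1 > -1`.
-/

open Set

lemma add_mul_sub_one_pos {c s x : ℝ} (hc : 0 < c) (hs : 0 ≤ s) (hsc : s ≤ c) (hx : 0 < x) :
    0 < c + s * (x - 1) := by
  nlinarith [mul_nonneg hs hx.le]

lemma hasDerivAt_add_rpow {c p t : ℝ} (ht : t + c ≠ 0) :
    HasDerivAt (fun t => (t + c) ^ p) (p * (t + c) ^ (p - 1)) t := by
  simpa using ((hasDerivAt_id t).add_const c).rpow_const (p := p) (Or.inl ht)

lemma intervalIntegrable_add_rpow {r : ℝ} (hr : -1 < r) (c a b : ℝ) :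
    IntervalIntegrable (fun t => (t + c) ^ r) MeasureTheory.volume a b := by
  simpa using
    (intervalIntegral.intervalIntegrable_rpow' hr (a := a + c) (b := b + c)).comp_add_right c

theorem integral_div_eq_log_sub_log {f f' : ℝ → ℝ} {a b : ℝ} (hab : a ≤ b)
    (hcont : ContinuousOn f (Icc a b)) (hne : ∀ t ∈ Icc a b, f t ≠ 0)
    (hderiv : ∀ t ∈ Ioo a b, HasDerivAt f (f' t) t)
    (hint : IntervalIntegrable (fun t => f' t / f t) MeasureTheory.volume a b) :
    ∫ t in a..b, f' t / f t = Real.log (f b) - Real.log (f a) :=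
  intervalIntegral.integral_eq_sub_of_hasDerivAt_of_le hab (hcont.log hne)
    (fun t ht => (hderiv t ht).log (hne t (Ioo_subset_Icc_self ht))) hint

/-- Example 1 generating function: for `a > 0` and `x > 0`,
`∫_{-1}^{1} a (t+1)^{a-1} (x-1) / (2^a + (t+1)^a (x-1)) dt = log x`. -/
theorem integral_generating_function_example1 (a x : ℝ) (ha : 0 < a) (hx : 0 < x) :
    ∫ t in (-1 : ℝ)..1,
      a * (t + 1) ^ (a - 1) * (x - 1) / ((2 : ℝ) ^ a + (t + 1) ^ a * (x - 1))
      = Real.log x := by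
  set D : ℝ → ℝ := fun t => (2 : ℝ) ^ a + (t + 1) ^ a * (x - 1)
  have h2a : (0 : ℝ) < 2 ^ a := by positivity
  have hD : ∀ t ∈ Icc (-1 : ℝ) 1, D t ≠ 0 := fun t ht =>
    (add_mul_sub_one_pos h2a (Real.rpow_nonneg (by linarith [ht.1]) a)
      (Real.rpow_le_rpow (by linarith [ht.1]) (by linarith [ht.2]) ha.le) hx).ne'
  have hDcont : Continuous D := by
    have : Continuous fun t : ℝ => (t + 1) ^ a :=
      (continuous_add_const 1).rpow_const fun _ => Or.inr ha.le
    fun_prop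
  have hint : IntervalIntegrable (fun t => a * (t + 1) ^ (a - 1) * (x - 1) / D t)
      MeasureTheory.volume (-1) 1 := by
    have hquot : ContinuousOn (fun t => a * (x - 1) / D t) (uIcc (-1) 1) :=
      continuousOn_const.div hDcont.continuousOn (by rwa [uIcc_of_le (by norm_num)])
    convert (intervalIntegrable_add_rpow (by linarith : -1 < a - 1) 1 (-1) 1).mul_continuousOn
      hquot using 2 with t
    ring
  rw [integral_div_eq_log_sub_log (by norm_num) hDcont.continuousOn hD
    (fun t ht => ((hasDerivAt_add_rpow (by linarith [ht.1])).mul_const (x - 1)).const_add _) hint]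
  have hD1 : D 1 = 2 ^ a * x := by norm_num [D]; ring
  have hDm1 : D (-1) = 2 ^ a := by norm_num [D, Real.zero_rpow ha.ne']
  rw [hD1, hDm1, Real.log_mul h2a.ne' hx.ne', add_sub_cancel_left]
end

section
/- For every positive integer s and every real number x > 0, the integral over t from -1 to 1 of 2^s·(x^{1/2^s} - 1) / (2 + (t+1)·(x^{1/2^s} - 1)) dt equals log x (the denominator 2 + (t+1)(x^{1/2^s}-1) is strictly positive for all t ∈ [-1,1] when x > 0). -/
/-- Example 2 generating function: for a positive integer `s` and `x > 0`,
`∫_{-1}^{1} 2^s (x^{1/2^s} - 1) / (2 + (t+1)(x^{1/2^s} - 1)) dt = log x`. -/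
theorem integral_generating_function_example2 (s : ℕ) (hs : 1 ≤ s) (x : ℝ) (hx : 0 < x) :
    ∫ t in (-1 : ℝ)..1,
      (2 : ℝ) ^ s * (x ^ ((1 : ℝ) / 2 ^ s) - 1) /
        (2 + (t + 1) * (x ^ ((1 : ℝ) / 2 ^ s) - 1))
      = Real.log x := by
  set y : ℝ := x ^ ((1 : ℝ) / 2 ^ s) with hy
  have hy0 : 0 < y := Real.rpow_pos_of_pos hx _
  set a : ℝ := y - 1 with ha
  have ha1 : -1 < a := by simp [ha]; linarith
  -- positivity of denominator on [-1,1]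
  have hden : ∀ t : ℝ, t ∈ Set.uIcc (-1 : ℝ) 1 → 0 < 2 + (t + 1) * a := by
    intro t ht
    rw [Set.uIcc_of_le (by norm_num)] at ht
    obtain ⟨ht1, ht2⟩ := ht
    rcases le_or_gt 0 a with h | h
    · nlinarith
    · nlinarith
  have key : ∫ t in (-1 : ℝ)..1, (2 : ℝ) ^ s * a / (2 + (t + 1) * a)
      = (2 : ℝ) ^ s * Real.log (2 + 2 * a) - (2 : ℝ) ^ s * Real.log 2 := by
    have := intervalIntegral.integral_eq_sub_of_hasDerivAt
      (f := fun t : ℝ => (2 : ℝ) ^ s * Real.log (2 + (t + 1) * a))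
      (f' := fun t : ℝ => (2 : ℝ) ^ s * a / (2 + (t + 1) * a))
      (a := (-1 : ℝ)) (b := 1)
      (fun t ht => by
        have h1 : HasDerivAt (fun t : ℝ => 2 + (t + 1) * a) a t := by
          simpa using ((hasDerivAt_id t).add_const 1).mul_const a |>.const_add 2
        have h2 := (h1.log (ne_of_gt (hden t ht))).const_mul ((2 : ℝ) ^ s)
        simpa [mul_div_assoc] using h2)
      (by
        apply ContinuousOn.intervalIntegrable
        apply ContinuousOn.div
        · exact continuousOn_const
        · fun_prop
        · intro t ht; exact ne_of_gt (hden t ht))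
    norm_num at this
    convert this using 3 <;> ring
  rw [key]
  have h2a : 2 + 2 * a = 2 * y := by ring
  rw [h2a, Real.log_mul (by norm_num) (ne_of_gt hy0)]
  have hlogy : Real.log y = (1 / 2 ^ s) * Real.log x := Real.log_rpow hx _
  have h2s : ((2 : ℝ) ^ s) * ((1 : ℝ) / 2 ^ s) = 1 := by
    field_simp
  rw [hlogy, mul_add, ← mul_assoc, h2s]; ring
end

section
/- For all real numbers x > 0 and x̂ > 0, the integral over t from -1 to 1 of (x/x̂ - 1) / (2 + (t+1)·(x/x̂ - 1)) dt equals log x - log x̂ (the denominator 2 + (t+1)(x/x̂ - 1) is strictly positive for all t ∈ [-1,1] when x/x̂ > 0). -/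
/-- Example 3 generating function (scaling): for `x > 0` and `x̂ > 0`,
`∫_{-1}^{1} (x/x̂ - 1) / (2 + (t+1)(x/x̂ - 1)) dt = log x - log x̂`. -/
theorem integral_generating_function_example3 (x xhat : ℝ) (hx : 0 < x) (hxhat : 0 < xhat) :
    ∫ t in (-1 : ℝ)..1,
      (x / xhat - 1) / (2 + (t + 1) * (x / xhat - 1))
      = Real.log x - Real.log xhat := by
  set c : ℝ := x / xhat - 1 with hc
  have hr : 0 < x / xhat := div_pos hx hxhat
  have hpos : ∀ t ∈ Set.uIcc (-1 : ℝ) 1, 0 < 2 + (t + 1) * c := by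
    intro t ht
    rw [Set.uIcc_of_le (by norm_num)] at ht
    obtain ⟨h1, h2⟩ := ht
    have hrc : c = x / xhat - 1 := hc
    clear_value c
    rcases le_or_gt c 0 with h | h
    · nlinarith [mul_nonneg (by linarith : (0:ℝ) ≤ 1 - t) (by linarith : (0:ℝ) ≤ -c)]
    · nlinarith
  have key : ∀ t ∈ Set.uIcc (-1 : ℝ) 1,
      HasDerivAt (fun s => Real.log (2 + (s + 1) * c)) (c / (2 + (t + 1) * c)) t := by
    intro t ht
    have h1 : HasDerivAt (fun s : ℝ => 2 + (s + 1) * c) c t := by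
      have := ((hasDerivAt_id t).add_const 1).mul_const c
      simpa using (this.const_add 2)
    have := h1.log (ne_of_gt (hpos t ht))
    simpa using this
  have hcont : ContinuousOn (fun t => c / (2 + (t + 1) * c)) (Set.uIcc (-1 : ℝ) 1) := by
    apply ContinuousOn.div continuousOn_const
    · fun_prop
    · intro t ht; exact ne_of_gt (hpos t ht)
  have := intervalIntegral.integral_eq_sub_of_hasDerivAt key (hcont.intervalIntegrable)
  rw [this]
  have h2 : (2:ℝ) + (1 + 1) * c = 2 * (x / xhat) := by ring
  have h0 : (2:ℝ) + (-1 + 1) * c = 2 := by ring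
  rw [h2, h0, Real.log_mul (by norm_num) (ne_of_gt hr), Real.log_div (ne_of_gt hx) (ne_of_gt hxhat)]
  ring
end

section
/- Let M > 1, a > 0, t ∈ (-1, 1], x ∈ [1/M, M] and v ∈ ℝ. Define r₁ = a - (t+1)·v and r₂ = a·(t+1)^{a-1}·(x-1) - 2^a·v. Then a·(t+1)^{a-1}·(x-1)/(2^a + (t+1)^a·(x-1)) ≥ v holds if and only if r₁ ≥ 0, r₂ ≥ 0 and r₁ + r₂ ≥ sqrt(2^{a+2}·(t+1)·v² + (r₁ - r₂)²). -/
/-- SOC representation of the hypograph of the generating function `φ₁(t,·)` of Example 1: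
for `M > 1`, `a > 0`, `t ∈ (-1, 1]`, `x ∈ [1/M, M]` and `v ∈ ℝ`, with
`r₁ = a - (t+1)v` and `r₂ = a(t+1)^{a-1}(x-1) - 2^a v`, one has
`φ₁(t,x) ≥ v ↔ r₁ ≥ 0 ∧ r₂ ≥ 0 ∧ r₁ + r₂ ≥ sqrt(2^{a+2}(t+1)v² + (r₁-r₂)²)`. -/
theorem soc_representation_example1 (M a t x v : ℝ) (hM : 1 < M) (ha : 0 < a)
    (ht : t ∈ Set.Ioc (-1 : ℝ) 1) (hx : x ∈ Set.Icc (1 / M) M) :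
    v ≤ a * (t + 1) ^ (a - 1) * (x - 1) / ((2 : ℝ) ^ a + (t + 1) ^ a * (x - 1)) ↔
      0 ≤ a - (t + 1) * v ∧
      0 ≤ a * (t + 1) ^ (a - 1) * (x - 1) - (2 : ℝ) ^ a * v ∧
      Real.sqrt ((2 : ℝ) ^ (a + 2) * (t + 1) * v ^ 2 +
          ((a - (t + 1) * v) - (a * (t + 1) ^ (a - 1) * (x - 1) - (2 : ℝ) ^ a * v)) ^ 2)
        ≤ (a - (t + 1) * v) + (a * (t + 1) ^ (a - 1) * (x - 1) - (2 : ℝ) ^ a * v) := by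
  obtain ⟨ht1, ht2⟩ := ht
  obtain ⟨hx1, hx2⟩ := hx
  have hM0 : (0:ℝ) < M := lt_trans one_pos hM
  have hx0 : 0 < x := lt_of_lt_of_le (by positivity) hx1
  have hxm : -1 < x - 1 := by linarith
  have hs : (0:ℝ) < t + 1 := by linarith
  have hs2 : t + 1 ≤ 2 := by linarith
  have hp : 0 < (t + 1) ^ (a - 1) := Real.rpow_pos_of_pos hs _
  have hsa : (t + 1) ^ a = (t + 1) * (t + 1) ^ (a - 1) := by
    have h := Real.rpow_add hs 1 (a - 1)
    rw [Real.rpow_one, show (1:ℝ) + (a - 1) = a by ring] at h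
    exact h
  have hc : (0:ℝ) < (2:ℝ) ^ a := Real.rpow_pos_of_pos two_pos a
  have h22 : (2:ℝ) ^ ((2:ℕ):ℝ) = 4 := by rw [Real.rpow_natCast]; norm_num
  have h4 : (2:ℝ) ^ (a + 2) = 4 * (2:ℝ) ^ a := by
    rw [show (a + 2 : ℝ) = a + ((2:ℕ):ℝ) by norm_num, Real.rpow_add two_pos, h22]; ring
  have hq : (t + 1) ^ a ≤ (2:ℝ) ^ a := Real.rpow_le_rpow hs.le hs2 ha.le
  have hq0 : 0 < (t + 1) ^ a := Real.rpow_pos_of_pos hs a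
  have hD : 0 < (2:ℝ) ^ a + (t + 1) ^ a * (x - 1) := by
    nlinarith [mul_pos hq0 hx0]
  rw [hsa, h4] at *
  set p := (t + 1) ^ (a - 1) with hpdef
  set c := (2:ℝ) ^ a with hcdef
  rw [le_div_iff₀ hD]
  constructor
  · intro h
    have hr1 : 0 ≤ a - (t + 1) * v := by
      nlinarith [mul_le_mul_of_nonneg_left h hs.le, mul_pos ha hc, hD]
    have hr2 : 0 ≤ a * p * (x - 1) - c * v := by
      nlinarith [mul_le_mul_of_nonneg_left h hc.le, hD,
        mul_nonneg (mul_nonneg ha.le hs.le) (sq_nonneg (p * (x - 1)))]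
    refine ⟨hr1, hr2, ?_⟩
    have hE : 4 * c * (t + 1) * v ^ 2 +
        ((a - (t + 1) * v) - (a * p * (x - 1) - c * v)) ^ 2 ≤
        ((a - (t + 1) * v) + (a * p * (x - 1) - c * v)) ^ 2 := by
      nlinarith [mul_nonneg ha.le (sub_nonneg.2 h)]
    calc Real.sqrt (4 * c * (t + 1) * v ^ 2 +
          ((a - (t + 1) * v) - (a * p * (x - 1) - c * v)) ^ 2)
        ≤ Real.sqrt (((a - (t + 1) * v) + (a * p * (x - 1) - c * v)) ^ 2) :=
          Real.sqrt_le_sqrt hE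
      _ = (a - (t + 1) * v) + (a * p * (x - 1) - c * v) :=
          Real.sqrt_sq (by linarith)
  · rintro ⟨hr1, hr2, hsq⟩
    have hE0 : 0 ≤ 4 * c * (t + 1) * v ^ 2 +
        ((a - (t + 1) * v) - (a * p * (x - 1) - c * v)) ^ 2 := by positivity
    have h2 : 4 * c * (t + 1) * v ^ 2 +
        ((a - (t + 1) * v) - (a * p * (x - 1) - c * v)) ^ 2 ≤
        ((a - (t + 1) * v) + (a * p * (x - 1) - c * v)) ^ 2 := by
      nlinarith [Real.sq_sqrt hE0, Real.sqrt_nonneg (4 * c * (t + 1) * v ^ 2 +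
        ((a - (t + 1) * v) - (a * p * (x - 1) - c * v)) ^ 2), hsq]
    have hid : ((a - (t + 1) * v) + (a * p * (x - 1) - c * v)) ^ 2 -
        (4 * c * (t + 1) * v ^ 2 +
          ((a - (t + 1) * v) - (a * p * (x - 1) - c * v)) ^ 2) =
        4 * a * (a * p * (x - 1) - v * (c + (t + 1) * p * (x - 1))) := by ring
    have h3 : 0 ≤ 4 * a * (a * p * (x - 1) - v * (c + (t + 1) * p * (x - 1))) := by
      linarith [h2, hid]
    have h4a : (0:ℝ) < 4 * a := by linarith
    have h5 : 0 ≤ a * p * (x - 1) - v * (c + (t + 1) * p * (x - 1)) :=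
      nonneg_of_mul_nonneg_right h3 h4a
    linarith [h5]
end

section
/- Let M > 1, let x ∈ [1/M, M] be real, and let z be a complex number with |z| < (M+1)/(M-1). Then 2 + (z+1)·(x-1) ≠ 0 whenever x ≠ 1, and the complex absolute value |(x-1)/(2+(z+1)(x-1))| is at most 1/((M+1)/(M-1) - |z|). -/
/-!
For `x ≠ 1` the denominator factors as `2 + (z+1)(x-1) = (x-1) ((x+1)/(x-1) + z)`, so the
quotient is `((x+1)/(x-1) + z)⁻¹`. On `[1/M, M]` the real number `|x+1|/|x-1|` is smallest at
the endpoints (it is invariant under `x ↦ 1/x` and decreasing on `(1, ∞)`), where it equals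
`(M+1)/(M-1)`; the reverse triangle inequality then keeps `(x+1)/(x-1) + z` at distance at
least `(M+1)/(M-1) - |z|` from `0`.
-/

theorem two_add_mul_sub_one_eq {K : Type*} [Field K] {a : K} (ha : a ≠ 1) (z : K) :
    2 + (z + 1) * (a - 1) = (a - 1) * ((a + 1) / (a - 1) + z) := by
  have : a - 1 ≠ 0 := sub_ne_zero.mpr ha
  field_simp
  ring

theorem norm_inv_add_le {K : Type*} [NormedDivisionRing K] {r : ℝ} {u z : K}
    (hu : r ≤ ‖u‖) (hz : ‖z‖ < r) : u + z ≠ 0 ∧ ‖(u + z)⁻¹‖ ≤ (r - ‖z‖)⁻¹ := by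
  have hpos : 0 < r - ‖z‖ := sub_pos.mpr hz
  have hle : r - ‖z‖ ≤ ‖u + z‖ := (sub_le_sub_right hu _).trans (norm_sub_le_norm_add u z)
  refine ⟨norm_pos_iff.mp (hpos.trans_le hle), ?_⟩
  rw [norm_inv]
  exact inv_anti₀ hpos hle

theorem div_le_abs_add_one_div_abs_sub_one {M x : ℝ} (hM : 1 < M)
    (hx : x ∈ Set.Icc (1 / M) M) (hx1 : x ≠ 1) :
    (M + 1) / (M - 1) ≤ |x + 1| / |x - 1| := by
  obtain ⟨hxl, hxu⟩ := hx
  have hMx : 1 ≤ M * x := by rwa [div_le_iff₀ (by linarith), mul_comm] at hxl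
  have hx0 : 0 < x := lt_of_lt_of_le (by positivity) hxl
  rw [abs_of_pos (by linarith : 0 < x + 1)]
  rcases lt_or_gt_of_ne hx1 with hlt | hgt
  · rw [abs_of_neg (by linarith), div_le_div_iff₀ (by linarith) (by linarith)]
    nlinarith
  · rw [abs_of_pos (by linarith), div_le_div_iff₀ (by linarith) (by linarith)]
    nlinarith

/-- Modulus bound for the generating function `φ₁` with `a = 1` (Corollary 2.1):
for `M > 1`, `x ∈ [1/M, M]` and `z : ℂ` with `|z| < (M+1)/(M-1)`, the denominator
`2 + (z+1)(x-1)` is nonzero whenever `x ≠ 1` and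
`|(x-1)/(2+(z+1)(x-1))| ≤ 1/((M+1)/(M-1) - |z|)`. -/
theorem modulus_bound_example1 (M x : ℝ) (z : ℂ) (hM : 1 < M)
    (hx : x ∈ Set.Icc (1 / M) M) (hz : ‖z‖ < (M + 1) / (M - 1)) :
    (x ≠ 1 → (2 + (z + 1) * ((x : ℂ) - 1)) ≠ 0) ∧
    ‖((x : ℂ) - 1) / (2 + (z + 1) * ((x : ℂ) - 1))‖
      ≤ 1 / ((M + 1) / (M - 1) - ‖z‖) := by
  by_cases hx1 : x = 1
  · subst hx1
    refine ⟨fun h => absurd rfl h, ?_⟩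
    simp only [Complex.ofReal_one, sub_self, zero_div, norm_zero, one_div, inv_nonneg]
    linarith
  have hx1ℂ : (x : ℂ) ≠ 1 := by exact_mod_cast hx1
  have hu : (M + 1) / (M - 1) ≤ ‖((x : ℂ) + 1) / ((x : ℂ) - 1)‖ := by
    rw [norm_div, ← Complex.ofReal_one, ← Complex.ofReal_add, ← Complex.ofReal_sub,
      Complex.norm_real, Complex.norm_real, Real.norm_eq_abs, Real.norm_eq_abs]
    exact div_le_abs_add_one_div_abs_sub_one hM hx hx1
  obtain ⟨hne, hbound⟩ := norm_inv_add_le hu hz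
  rw [two_add_mul_sub_one_eq hx1ℂ, div_mul_cancel_left₀ (sub_ne_zero.mpr hx1ℂ), one_div]
  exact ⟨fun _ => mul_ne_zero (sub_ne_zero.mpr hx1ℂ) hne, hbound⟩
end

section
/- Let L̂ > 0, let ε be a real number with 0 < ε ≤ L̂, let x be a real number with |x| ≤ L̂, and let N be a natural number with 2^N ≥ 4L̂²/ε. Then exp(x - ε) ≤ (1 + 2^{-N}·x)^{2^N} ≤ exp(x). -/
set_option maxHeartbeats 800000 in
/-- Proposition 3.1: for `L̂ > 0`, `0 < ε ≤ L̂`, `|x| ≤ L̂` and `N` with `2^N ≥ 4L̂²/ε`,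
`exp(x - ε) ≤ (1 + 2^{-N} x)^{2^N} ≤ exp(x)`. -/
theorem exp_outer_approx (L ε x : ℝ) (N : ℕ) (hL : 0 < L) (hε : 0 < ε) (hεL : ε ≤ L)
    (hx : |x| ≤ L) (hN : 4 * L ^ 2 / ε ≤ (2 : ℝ) ^ N) :
    Real.exp (x - ε) ≤ (1 + (2 : ℝ) ^ (-(N : ℤ)) * x) ^ (2 ^ N) ∧
      (1 + (2 : ℝ) ^ (-(N : ℤ)) * x) ^ (2 ^ N) ≤ Real.exp x := by
  set n : ℝ := (2 : ℝ) ^ N with hn_def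
  have hn : (0 : ℝ) < n := by positivity
  have hzpow : (2 : ℝ) ^ (-(N : ℤ)) = n⁻¹ := by
    rw [zpow_neg, zpow_natCast]
  have hcast : ((2 ^ N : ℕ) : ℝ) = n := by push_cast; rfl
  clear_value n
  -- n ≥ 4 L^2 / ε, so ε * n ≥ 4 L^2
  have hεn : 4 * L ^ 2 ≤ ε * n := by
    rw [div_le_iff₀ hε] at hN
    linarith
  -- n ≥ 4 L since 4L = 4L²/L ≤ 4L²/ε ≤ n
  have h4L : 4 * L ≤ n := by
    have : 4 * L ≤ 4 * L ^ 2 / ε := by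
      rw [le_div_iff₀ hε]
      nlinarith
    linarith
  have hxabs : |x| ≤ n / 4 := by linarith
  have hxle : x ≤ n / 4 := (abs_le.mp hxabs).2
  have hxge : -(n / 4) ≤ x := (abs_le.mp hxabs).1
  set t : ℝ := x / n with ht_def
  clear_value t
  have htle : t ≤ 1 / 4 := by
    rw [ht_def, div_le_iff₀ hn]; linarith
  have htge : -(1 / 4) ≤ t := by
    rw [ht_def, le_div_iff₀ hn]; linarith
  have h1t : (0 : ℝ) < 1 + t := by linarith
  have hform : 1 + (2 : ℝ) ^ (-(N : ℤ)) * x = 1 + t := by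
    rw [hzpow, ht_def, inv_mul_eq_div]
  rw [hform]
  constructor
  · -- lower bound
    have hrw : Real.exp (x - ε) = Real.exp ((x - ε) / n) ^ (2 ^ N) := by
      rw [← Real.exp_nat_mul, hcast, mul_div_cancel₀ _ hn.ne']
    rw [hrw]
    apply pow_le_pow_left₀ (Real.exp_pos _).le
    -- key: exp ((x-ε)/n) ≤ 1 + t
    set s : ℝ := (x - ε) / n with hs_def
    clear_value s
    have hst : s = t - ε / n := by
      rw [hs_def, ht_def, sub_div]
    have hεnpos : 0 < ε / n := by positivity
    have hs1 : s < 1 := by rw [hst]; linarith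
    have h1s : 0 < 1 - s := by linarith
    have key : 1 - s ≤ Real.exp (-s) := by
      have := Real.add_one_le_exp (-s); linarith
    have hexp : Real.exp s * (1 - s) ≤ 1 := by
      calc Real.exp s * (1 - s) ≤ Real.exp s * Real.exp (-s) := by
            apply mul_le_mul_of_nonneg_left key (Real.exp_pos s).le
        _ = 1 := by rw [← Real.exp_add]; simp
    rw [← le_div_iff₀ h1s] at hexp
    refine hexp.trans ?_
    rw [div_le_iff₀ h1s, hst]
    -- need 1 ≤ (1+t)(1 - t + ε/n), i.e. (1+t)·ε/n ≥ t²
    have ht2 : t ^ 2 ≤ L ^ 2 / n ^ 2 := by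
      rw [ht_def, div_pow, div_le_div_iff₀ (by positivity) (by positivity)]
      have hx2 : x ^ 2 ≤ L ^ 2 := by nlinarith [sq_abs x, abs_nonneg x]
      nlinarith [mul_le_mul_of_nonneg_right hx2 (by positivity : (0:ℝ) ≤ n ^ 2)]
    have hε2 : 4 * L ^ 2 / n ^ 2 ≤ ε / n := by
      rw [div_le_div_iff₀ (by positivity) hn]
      nlinarith
    have hA : 4 * t ^ 2 ≤ ε / n := by
      have : 4 * (L ^ 2 / n ^ 2) = 4 * L ^ 2 / n ^ 2 := by ring
      nlinarith [ht2]
    nlinarith [hA, mul_nonneg (by linarith : (0:ℝ) ≤ t + 1/4) hεnpos.le, sq_nonneg t]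
  · -- upper bound
    have hrw : Real.exp x = Real.exp t ^ (2 ^ N) := by
      rw [← Real.exp_nat_mul, hcast, ht_def, mul_div_cancel₀ _ hn.ne']
    rw [hrw]
    exact pow_le_pow_left₀ h1t.le (by linarith [Real.add_one_le_exp t]) _
end

section
/- Let M > 1, let ε ∈ (0, 2M²·log M), and let N be a natural number with 2^N ≥ 16·M⁴·(log M)²/ε. Let (x₁, x₂, x₃) ∈ ℝ³ satisfy x₁ ∈ [1/M, M], x₂ ∈ [1/M, M] and x₃ ∈ [-2M·log M, 2M·log M]. Then: (i) if exp(x₃/x₂) ≤ x₁/x₂ then (1 + 2^{-N}·(x₃/x₂))^{2^N} ≤ x₁/x₂; and (ii) if (1 + 2^{-N}·(x₃/x₂))^{2^N} ≤ x₁/x₂ then exp(x₃/x₂ - ε) ≤ x₁/x₂. -/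
private lemma exp_le_one_add_aux (u : ℝ) (h : -(1/4) ≤ u) :
    Real.exp (u - 2*u^2) ≤ 1 + u := by
  set x := u - 2*u^2 with hx
  have hx1 : x < 1 := by nlinarith [sq_nonneg (u - 1/4)]
  have h1 : 1 - x ≤ Real.exp (-x) := by
    have := Real.add_one_le_exp (-x); linarith
  have hpos : 0 < 1 - x := by linarith
  have h2 : Real.exp x ≤ (1 - x)⁻¹ := by
    have := inv_anti₀ hpos h1
    rwa [Real.exp_neg, inv_inv] at this
  refine h2.trans ?_
  rw [inv_le_iff_one_le_mul₀ hpos]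
  nlinarith [sq_nonneg u]

/-- Theorem 3.1: sandwich property `K_exp(0) ⊆ K̂ ⊆ K_exp(ε)` of the SOC approximation
of the exponential cone via `(1 + 2^{-N} x₃/x₂)^{2^N}`. -/
theorem exp_cone_soc_approx (M ε : ℝ) (N : ℕ) (x₁ x₂ x₃ : ℝ) (hM : 1 < M)
    (hε : ε ∈ Set.Ioo 0 (2 * M ^ 2 * Real.log M))
    (hN : 16 * M ^ 4 * (Real.log M) ^ 2 / ε ≤ (2 : ℝ) ^ N)
    (hx₁ : x₁ ∈ Set.Icc (1 / M) M) (hx₂ : x₂ ∈ Set.Icc (1 / M) M)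
    (hx₃ : x₃ ∈ Set.Icc (-(2 * M * Real.log M)) (2 * M * Real.log M)) :
    (Real.exp (x₃ / x₂) ≤ x₁ / x₂ →
        (1 + (2 : ℝ) ^ (-(N : ℤ)) * (x₃ / x₂)) ^ (2 ^ N) ≤ x₁ / x₂) ∧
      ((1 + (2 : ℝ) ^ (-(N : ℤ)) * (x₃ / x₂)) ^ (2 ^ N) ≤ x₁ / x₂ →
        Real.exp (x₃ / x₂ - ε) ≤ x₁ / x₂) := by
  obtain ⟨hε0, hεu⟩ := hε
  have hM0 : (0:ℝ) < M := by linarith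
  have hlogM : 0 < Real.log M := Real.log_pos hM
  have hx2pos : 0 < x₂ := lt_of_lt_of_le (by positivity) hx₂.1
  set t : ℝ := x₃ / x₂ with ht
  set n : ℝ := (2:ℝ)^N with hn'
  have hnpos : (0:ℝ) < n := by positivity
  have hzpow : (2:ℝ) ^ (-(N : ℤ)) = n⁻¹ := by
    rw [zpow_neg, zpow_natCast]
  -- bound on |t|
  have htb : |t| ≤ 2 * M^2 * Real.log M := by
    have hx3 : |x₃| ≤ 2 * M * Real.log M := abs_le.2 ⟨hx₃.1, hx₃.2⟩
    have hinv : x₂⁻¹ ≤ M := by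
      rw [inv_le_comm₀ hx2pos hM0]
      simpa [one_div] using hx₂.1
    have : |t| = |x₃| * x₂⁻¹ := by
      rw [ht, div_eq_mul_inv, abs_mul, abs_of_pos (inv_pos.2 hx2pos)]
    rw [this]
    calc |x₃| * x₂⁻¹ ≤ (2 * M * Real.log M) * M := by
          apply mul_le_mul hx3 hinv (le_of_lt (inv_pos.2 hx2pos)) (by positivity)
      _ = 2 * M^2 * Real.log M := by ring
  -- n is large: n ≥ 8 M² log M
  have hnbig : 8 * M^2 * Real.log M ≤ n := by
    have h1 : 16 * M ^ 4 * Real.log M ^ 2 / (2 * M ^ 2 * Real.log M)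
        ≤ 16 * M ^ 4 * Real.log M ^ 2 / ε :=
      div_le_div_of_nonneg_left (by positivity) hε0 (le_of_lt hεu)
    have h2 : 16 * M ^ 4 * Real.log M ^ 2 / (2 * M ^ 2 * Real.log M)
        = 8 * M^2 * Real.log M := by
      field_simp; ring
    linarith
  have ht4 : 4 * |t| ≤ n := by
    calc 4 * |t| ≤ 4 * (2 * M^2 * Real.log M) := by linarith
      _ = 8 * M^2 * Real.log M := by ring
      _ ≤ n := hnbig
  set u : ℝ := n⁻¹ * t with hu'
  have hub : |u| ≤ 1/4 := by
    rw [hu', abs_mul, abs_of_pos (inv_pos.2 hnpos)]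
    rw [mul_comm, ← div_eq_mul_inv, div_le_iff₀ hnpos]
    linarith
  have hu1 : -(1/4) ≤ u := by cases abs_le.1 hub; linarith
  have hu2 : u ≤ 1/4 := (abs_le.1 hub).2
  have hnu : n * u = t := by
    rw [hu']; field_simp
  have hεn : 2 * n * u^2 ≤ ε := by
    have h1 : 16 * M ^ 4 * Real.log M ^ 2 ≤ ε * n := by
      rw [hn']; exact (div_le_iff₀ hε0).1 hN |>.trans_eq (by ring)
    have ht2 : t^2 ≤ 4 * M^4 * Real.log M ^ 2 := by
      have := sq_abs t
      nlinarith [abs_nonneg t, sq_nonneg (2 * M^2 * Real.log M)]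
    have : n * (2 * n * u^2) = 2 * t^2 := by
      rw [hu']; field_simp
    nlinarith
  have h1u : (0:ℝ) ≤ 1 + u := by linarith
  -- main sandwich: exp (t - ε) ≤ (1+u)^(2^N) ≤ exp t
  have key_up : (1 + u) ^ (2^N) ≤ Real.exp t := by
    have h1 : (1 + u) ^ (2^N) ≤ (Real.exp u) ^ (2^N) :=
      pow_le_pow_left₀ h1u (by linarith [Real.add_one_le_exp u]) _
    have h2 : (Real.exp u) ^ (2^N) = Real.exp (n * u) := by
      rw [← Real.exp_nat_mul, hn']; norm_num
    rw [h2, hnu] at h1; exact h1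
  have key_lo : Real.exp (t - ε) ≤ (1 + u) ^ (2^N) := by
    have h1 : Real.exp (u - 2*u^2) ^ (2^N) ≤ (1 + u) ^ (2^N) :=
      pow_le_pow_left₀ (Real.exp_pos _).le (exp_le_one_add_aux u hu1) _
    have h2 : Real.exp (u - 2*u^2) ^ (2^N) = Real.exp (n * (u - 2*u^2)) := by
      rw [← Real.exp_nat_mul, hn']; norm_num
    have h3 : t - ε ≤ n * (u - 2*u^2) := by
      have : n * (u - 2*u^2) = t - 2 * n * u^2 := by rw [mul_sub, hnu]; ring
      rw [this]; linarith
    calc Real.exp (t - ε) ≤ Real.exp (n * (u - 2*u^2)) := Real.exp_le_exp.2 h3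
      _ = Real.exp (u - 2*u^2) ^ (2^N) := h2.symm
      _ ≤ (1 + u) ^ (2^N) := h1
  rw [hzpow]
  exact ⟨fun h => key_up.trans h, fun h => key_lo.trans h⟩
end

section
/- For every natural number s ≥ 1 and every real number y, the even-order Taylor polynomial of the exponential function satisfies Σ_{i=0}^{2s} y^i/i! ≥ 0. -/
/-!
With `p n y = ∑_{i ≤ n} y^i / i!` we have `p n' = p n - y^n / n!`, so
`(e^{-y} p n y)' = -e^{-y} y^n / n!`. For even `n` this is `≤ 0`, hence `e^{-y} p n y` is
antitone and `p n y ≥ e^y > 0` for `y ≤ 0`.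
-/

open Finset Real

noncomputable def expTaylor (n : ℕ) (y : ℝ) : ℝ :=
  ∑ i ∈ range (n + 1), y ^ i / (i.factorial : ℝ)

namespace expTaylor

theorem zero (y : ℝ) : expTaylor 0 y = 1 := by
  simp [expTaylor]

theorem succ (n : ℕ) (y : ℝ) :
    expTaylor (n + 1) y = expTaylor n y + y ^ (n + 1) / ((n + 1).factorial : ℝ) :=
  sum_range_succ _ _

theorem apply_zero (n : ℕ) : expTaylor n 0 = 1 := by
  induction n with
  | zero => exact zero 0
  | succ n ih => simp [succ, ih]

theorem nonneg_of_nonneg (n : ℕ) {y : ℝ} (hy : 0 ≤ y) : 0 ≤ expTaylor n y :=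
  sum_nonneg fun i _ => by positivity

theorem hasDerivAt (n : ℕ) (y : ℝ) :
    HasDerivAt (expTaylor n) (expTaylor n y - y ^ n / (n.factorial : ℝ)) y := by
  induction n with
  | zero =>
    rw [expTaylor.zero, funext expTaylor.zero]
    simpa using hasDerivAt_const y (1 : ℝ)
  | succ n ih =>
    have hpow : HasDerivAt (fun y : ℝ => y ^ (n + 1) / ((n + 1).factorial : ℝ))
        (y ^ n / (n.factorial : ℝ)) y := by
      refine ((hasDerivAt_pow (n + 1) y).div_const _).congr_deriv ?_
      rw [Nat.factorial_succ]
      push_cast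
      field_simp
    rw [succ, funext (succ n)]
    exact (ih.add hpow).congr_deriv (by ring)

theorem hasDerivAt_exp_neg_mul (n : ℕ) (y : ℝ) :
    HasDerivAt (fun y => exp (-y) * expTaylor n y)
      (-(exp (-y) * (y ^ n / (n.factorial : ℝ)))) y :=
  ((hasDerivAt_neg y).exp.mul (hasDerivAt n y)).congr_deriv (by ring)

theorem antitone_exp_neg_mul {n : ℕ} (hn : Even n) :
    Antitone fun y => exp (-y) * expTaylor n y := by
  refine antitone_of_hasDerivAt_nonpos (hasDerivAt_exp_neg_mul n) fun y => neg_nonpos.mpr ?_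
  have := hn.pow_nonneg y
  positivity

theorem exp_le_of_nonpos {n : ℕ} (hn : Even n) {y : ℝ} (hy : y ≤ 0) :
    exp y ≤ expTaylor n y := by
  have h : exp (-0) * expTaylor n 0 ≤ exp (-y) * expTaylor n y := antitone_exp_neg_mul hn hy
  rwa [neg_zero, exp_zero, one_mul, apply_zero, exp_neg, ← div_eq_inv_mul,
    one_le_div (exp_pos y)] at h

end expTaylor

theorem even_taylor_exp_nonneg_general (s : ℕ) (y : ℝ) :
    0 ≤ ∑ i ∈ Finset.range (2 * s + 1), y ^ i / (Nat.factorial i : ℝ) := by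
  change 0 ≤ expTaylor (2 * s) y
  rcases le_total 0 y with hy | hy
  · exact expTaylor.nonneg_of_nonneg _ hy
  · exact (exp_pos y).le.trans (expTaylor.exp_le_of_nonpos (even_two_mul s) hy)

/-- Proposition 3.2: every even-order Taylor polynomial of the exponential function
is nonnegative on all of `ℝ`. -/
theorem even_taylor_exp_nonneg (s : ℕ) (hs : 1 ≤ s) (y : ℝ) :
    0 ≤ ∑ i ∈ Finset.range (2 * s + 1), y ^ i / (Nat.factorial i : ℝ) :=
  even_taylor_exp_nonneg_general s y
end

section
/- Let s ≥ 1 and N ≥ 0 be integers and let x be a real number with 0 ≤ x ≤ 2^N. Then exp(x - x^{2s+1}/(2^{2Ns}·(2s+1)!) - x^{4s+2}/(2^{N(4s+1)-2}·((2s+1)!)²)) ≤ (Σ_{i=0}^{2s} (x/2^N)^i/i!)^{2^N} ≤ exp(x). -/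
/-! Put `y = x / 2^N ∈ [0, 1]` and `r = y^(2s+1)/(2s+1)!`, so `r ≤ 1/2`. The upper bound is
`∑_{i ≤ 2s} y^i/i! ≤ exp y`, raised to the power `2^N`. For the lower bound, the Taylor tail is
at most `r · exp y` because `(j + n)! ≥ j! n!`, so the Taylor polynomial is at least
`(1 - r) exp y ≥ exp (y - r - 4r²)`; raising to the power `2^N` turns the exponent
`2^N (y - r - 4r²)` into the one of the statement. -/

open Finset
open scoped Nat

namespace Real

lemma exp_le_sum_range_add_pow_div_factorial_mul_exp (n : ℕ) {y : ℝ} (hy : 0 ≤ y) :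
    exp y ≤ ∑ i ∈ range n, y ^ i / i ! + y ^ n / n ! * exp y := by
  have hsum : Summable (fun i : ℕ => y ^ i / i !) := summable_pow_div_factorial y
  have hexp : exp y = ∑' i : ℕ, y ^ i / i ! := by
    rw [exp_eq_exp_ℝ, NormedSpace.exp_eq_tsum_div]
  have hterm (j : ℕ) : y ^ (j + n) / (j + n)! ≤ y ^ n / n ! * (y ^ j / j !) := by
    rw [div_mul_div_comm, ← pow_add, add_comm n j]
    have hfac : (n ! * j ! : ℝ) ≤ (j + n)! := by
      exact_mod_cast Nat.le_of_dvd (Nat.factorial_pos _)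
        (add_comm n j ▸ Nat.factorial_mul_factorial_dvd_factorial_add n j)
    gcongr
  have htail : ∑' j : ℕ, y ^ (j + n) / (j + n)! ≤ y ^ n / n ! * exp y := by
    rw [hexp, ← tsum_mul_left]
    exact Summable.tsum_le_tsum hterm ((summable_nat_add_iff n).2 hsum) (hsum.mul_left _)
  calc exp y = ∑ i ∈ range n, y ^ i / i ! + ∑' j : ℕ, y ^ (j + n) / (j + n)! := by
        rw [hexp, hsum.sum_add_tsum_nat_add]
    _ ≤ _ := by gcongr

lemma exp_neg_add_four_mul_sq_le_one_sub {r : ℝ} (hr : r ≤ 3 / 4) :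
    exp (-(r + 4 * r ^ 2)) ≤ 1 - r := by
  rw [exp_neg, inv_le_iff_one_le_mul₀ (exp_pos _)]
  -- `(1 - r)(1 + r + 4r²) = 1 + r²(3 - 4r)`
  nlinarith [add_one_le_exp (r + 4 * r ^ 2), mul_nonneg (sq_nonneg r) (by linarith : 0 ≤ 3 - 4 * r)]

lemma exp_sub_le_sum_range_pow_div_factorial {n : ℕ} (hn : 2 ≤ n) {y : ℝ} (hy0 : 0 ≤ y)
    (hy1 : y ≤ 1) :
    exp (y - (y ^ n / n ! + 4 * (y ^ n / n !) ^ 2)) ≤ ∑ i ∈ range n, y ^ i / i ! := by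
  set r := y ^ n / (n ! : ℝ)
  have hr : r ≤ 3 / 4 := by
    have hfac : (2 : ℝ) ≤ n ! := by exact_mod_cast (Nat.factorial_le hn).trans' (by decide)
    calc r ≤ 1 / 2 := div_le_div₀ (by norm_num) (pow_le_one₀ hy0 hy1) (by norm_num) hfac
      _ ≤ 3 / 4 := by norm_num
  calc exp (y - (r + 4 * r ^ 2)) = exp y * exp (-(r + 4 * r ^ 2)) := by
        rw [← exp_add, sub_eq_add_neg]
    _ ≤ exp y * (1 - r) := by gcongr; exact exp_neg_add_four_mul_sq_le_one_sub hr
    _ ≤ _ := by linarith [exp_le_sum_range_add_pow_div_factorial_mul_exp n hy0]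

end Real

lemma sub_pow_div_sub_pow_div_eq_two_pow_mul (s N : ℕ) (x : ℝ) :
    x - x ^ (2 * s + 1) / ((2 : ℝ) ^ (2 * N * s) * ((2 * s + 1)! : ℝ))
        - x ^ (4 * s + 2) / ((2 : ℝ) ^ ((N : ℤ) * (4 * s + 1) - 2) * ((2 * s + 1)! : ℝ) ^ 2)
      = 2 ^ N * (x / 2 ^ N - ((x / 2 ^ N) ^ (2 * s + 1) / (2 * s + 1)!
          + 4 * ((x / 2 ^ N) ^ (2 * s + 1) / (2 * s + 1)!) ^ 2)) := by
  have hz : (2 : ℝ) ^ ((N : ℤ) * (4 * s + 1) - 2) = 2 ^ (4 * N * s) * 2 ^ N / 4 := by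
    rw [zpow_sub₀ two_ne_zero, ← pow_add,
      show (N : ℤ) * (4 * s + 1) = ((4 * N * s + N : ℕ) : ℤ) by push_cast; ring, zpow_natCast]
    norm_num
  have h2 : (2 : ℝ) ^ (N * (2 * s + 1)) = 2 ^ (2 * N * s) * 2 ^ N := by
    rw [← pow_add]; ring_nf
  rw [hz, div_pow, ← pow_mul, h2]
  field_simp
  ring

/-- Case 1 of Proposition 3.4 (nonnegative argument): for integers `s ≥ 1`, `N ≥ 0`
and `0 ≤ x ≤ 2^N`,
`exp(x - x^{2s+1}/(2^{2Ns}(2s+1)!) - x^{4s+2}/(2^{N(4s+1)-2}((2s+1)!)²))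
  ≤ (∑_{i=0}^{2s} (x/2^N)^i/i!)^{2^N} ≤ exp(x)`. -/
theorem taylor_pow_approx_exp_nonneg (s N : ℕ) (hs : 1 ≤ s) (x : ℝ)
    (hx0 : 0 ≤ x) (hx1 : x ≤ 2 ^ N) :
    Real.exp (x - x ^ (2 * s + 1) / ((2 : ℝ) ^ (2 * N * s) * (Nat.factorial (2 * s + 1) : ℝ))
          - x ^ (4 * s + 2) /
              ((2 : ℝ) ^ ((N : ℤ) * (4 * s + 1) - 2) * (Nat.factorial (2 * s + 1) : ℝ) ^ 2))
        ≤ (∑ i ∈ Finset.range (2 * s + 1), (x / 2 ^ N) ^ i / (Nat.factorial i : ℝ)) ^ (2 ^ N) ∧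
      (∑ i ∈ Finset.range (2 * s + 1), (x / 2 ^ N) ^ i / (Nat.factorial i : ℝ)) ^ (2 ^ N)
        ≤ Real.exp x := by
  have hy0 : 0 ≤ x / 2 ^ N := by positivity
  have hy1 : x / 2 ^ N ≤ 1 := div_le_one_of_le₀ hx1 (by positivity)
  have hexp_pow (t : ℝ) : Real.exp (2 ^ N * t) = Real.exp t ^ 2 ^ N := by
    rw [← Real.exp_nat_mul]; push_cast; rfl
  constructor
  · rw [sub_pow_div_sub_pow_div_eq_two_pow_mul, hexp_pow]
    exact pow_le_pow_left₀ (Real.exp_pos _).le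
      (Real.exp_sub_le_sum_range_pow_div_factorial (by omega) hy0 hy1) _
  · calc _ ≤ Real.exp (x / 2 ^ N) ^ 2 ^ N :=
          pow_le_pow_left₀ (sum_nonneg fun i _ => by positivity)
            (Real.sum_le_exp_of_nonneg hy0 _) _
      _ = Real.exp x := by rw [← hexp_pow, mul_div_cancel₀ _ (by positivity)]
end

section
/- Let s ≥ 1 and N ≥ 0 be integers and let x be a real number with -2^N ≤ x ≤ 0. Then exp(x) ≤ (Σ_{i=0}^{2s} (x/2^N)^i/i!)^{2^N} ≤ exp(x - 3·x^{2s-1}/(2^{N(2s-2)}·(2s+1)!)). -/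
/-!
For `y = x / 2^N ∈ [-1, 0]` the exponential series at `y` is alternating with terms of
decreasing absolute value, so its partial sums bracket `exp y`:
`exp y ≤ P₂ₛ(y) ≤ exp y - y^(2s+1)/(2s+1)!`. Writing `y^(2s+1) = y^(2s-1) y²` and using
`y² ≤ 3 exp y` together with `1 + b ≤ exp b`, the last bound is at most
`exp (y - 3 y^(2s-1)/(2s+1)!)`. Raising everything to the power `2^N` gives the claim,
since `exp x = (exp y)^(2^N)`.
-/

open Real Finset Filter Topology Nat

namespace Real

lemma antitone_pow_div_factorial {t : ℝ} (ht0 : 0 ≤ t) (ht1 : t ≤ 1) :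
    Antitone fun n : ℕ ↦ t ^ n / n ! :=
  antitone_nat_of_succ_le fun n ↦
    div_le_div₀ (by positivity) (pow_le_pow_of_le_one ht0 ht1 n.le_succ) (by positivity)
      (mod_cast factorial_le n.le_succ)

lemma neg_one_pow_mul_neg_pow_div_factorial (y : ℝ) (n : ℕ) :
    (-1) ^ n * ((-y) ^ n / n !) = y ^ n / n ! := by
  rw [← mul_div_assoc, ← mul_pow]; simp

lemma tendsto_sum_range_neg_one_pow_mul_neg_pow_div_factorial (y : ℝ) :
    Tendsto (fun n ↦ ∑ i ∈ range n, (-1) ^ i * ((-y) ^ i / i !)) atTop (𝓝 (exp y)) := by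
  simp_rw [neg_one_pow_mul_neg_pow_div_factorial, exp_eq_exp_ℝ]
  exact (NormedSpace.expSeries_div_hasSum_exp y).tendsto_sum_nat

variable {y : ℝ}

theorem exp_le_sum_range_two_mul_add_one (hy0 : -1 ≤ y) (hy1 : y ≤ 0) (k : ℕ) :
    exp y ≤ ∑ i ∈ range (2 * k + 1), y ^ i / i ! := by
  simpa only [neg_one_pow_mul_neg_pow_div_factorial] using
    (antitone_pow_div_factorial (neg_nonneg.2 hy1) (neg_le.1 hy0)).tendsto_le_alternating_series
      (tendsto_sum_range_neg_one_pow_mul_neg_pow_div_factorial y) k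

theorem sum_range_two_mul_le_exp (hy0 : -1 ≤ y) (hy1 : y ≤ 0) (k : ℕ) :
    ∑ i ∈ range (2 * k), y ^ i / i ! ≤ exp y := by
  simpa only [neg_one_pow_mul_neg_pow_div_factorial] using
    (antitone_pow_div_factorial (neg_nonneg.2 hy1) (neg_le.1 hy0)).alternating_series_le_tendsto
      (tendsto_sum_range_neg_one_pow_mul_neg_pow_div_factorial y) k

lemma exp_add_le_exp_add {y a b : ℝ} (h : a ≤ b * exp y) : exp y + a ≤ exp (y + b) :=
  calc exp y + a ≤ exp y * (b + 1) := by linarith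
    _ ≤ exp y * exp b := by gcongr; exact add_one_le_exp b
    _ = exp (y + b) := (exp_add y b).symm

lemma sq_le_three_mul_exp (hy : -1 ≤ y) : y ^ 2 ≤ 3 * exp y := by
  rcases le_total y 0 with hy0 | hy0
  · have : exp (-1) ≤ exp y := exp_le_exp.2 hy
    nlinarith [exp_neg_one_gt_d9]
  · nlinarith [quadratic_le_exp_of_nonneg hy0]

theorem sum_range_two_mul_add_one_le_exp_sub (hy0 : -1 ≤ y) (hy1 : y ≤ 0) {s : ℕ}
    (hs : 1 ≤ s) :
    ∑ i ∈ range (2 * s + 1), y ^ i / i ! ≤ exp (y - 3 * y ^ (2 * s - 1) / (2 * s + 1)!) := by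
  have hpow : y ^ (2 * s + 1) = y ^ (2 * s - 1) * y ^ 2 := by
    rw [← pow_add]; congr 1; omega
  have hodd : y ^ (2 * s - 1) ≤ 0 := Odd.pow_nonpos ⟨s - 1, by omega⟩ hy1
  have htail :
      -(y ^ (2 * s + 1) / (2 * s + 1)!) ≤ -(3 * y ^ (2 * s - 1) / (2 * s + 1)!) * exp y := by
    rw [← neg_div, ← neg_div, div_mul_eq_mul_div]
    gcongr
    rw [hpow]
    nlinarith [mul_le_mul_of_nonpos_left (sq_le_three_mul_exp hy0) hodd]
  calc ∑ i ∈ range (2 * s + 1), y ^ i / i !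
      ≤ exp y - y ^ (2 * s + 1) / (2 * s + 1)! := by
        have := sum_range_two_mul_le_exp hy0 hy1 (s + 1)
        rw [show 2 * (s + 1) = 2 * s + 1 + 1 by ring, sum_range_succ] at this
        linarith
    _ ≤ exp (y - 3 * y ^ (2 * s - 1) / (2 * s + 1)!) := by
        rw [sub_eq_add_neg, sub_eq_add_neg]
        exact exp_add_le_exp_add (by linarith)

lemma exp_div_nat_pow (x : ℝ) {n : ℕ} (hn : n ≠ 0) : exp (x / n) ^ n = exp x := by
  rw [← exp_nat_mul, mul_div_cancel₀ _ (Nat.cast_ne_zero.2 hn)]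

end Real

/-- Case 2 of Proposition 3.4 (nonpositive argument): for integers `s ≥ 1`, `N ≥ 0`
and `-2^N ≤ x ≤ 0`,
`exp(x) ≤ (∑_{i=0}^{2s} (x/2^N)^i/i!)^{2^N} ≤ exp(x - 3x^{2s-1}/(2^{N(2s-2)}(2s+1)!))`. -/
theorem taylor_pow_approx_exp_nonpos (s N : ℕ) (hs : 1 ≤ s) (x : ℝ)
    (hx0 : -(2 ^ N) ≤ x) (hx1 : x ≤ 0) :
    Real.exp x
        ≤ (∑ i ∈ Finset.range (2 * s + 1), (x / 2 ^ N) ^ i / (Nat.factorial i : ℝ)) ^ (2 ^ N) ∧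
      (∑ i ∈ Finset.range (2 * s + 1), (x / 2 ^ N) ^ i / (Nat.factorial i : ℝ)) ^ (2 ^ N)
        ≤ Real.exp (x - 3 * x ^ (2 * s - 1) /
            ((2 : ℝ) ^ (N * (2 * s - 2)) * (Nat.factorial (2 * s + 1) : ℝ))) := by
  have h2N : (0 : ℝ) < 2 ^ N := by positivity
  have hy0 : -1 ≤ x / 2 ^ N := by rw [le_div_iff₀ h2N]; linarith
  have hy1 : x / 2 ^ N ≤ 0 := div_nonpos_of_nonpos_of_nonneg hx1 h2N.le
  have hexp (z : ℝ) : exp (z / 2 ^ N) ^ 2 ^ N = exp z := by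
    exact_mod_cast exp_div_nat_pow z (n := 2 ^ N) (by positivity)
  have hscale : (x - 3 * x ^ (2 * s - 1) / (2 ^ (N * (2 * s - 2)) * (2 * s + 1)!)) / 2 ^ N
      = x / 2 ^ N - 3 * (x / 2 ^ N) ^ (2 * s - 1) / (2 * s + 1)! := by
    have : (2 : ℝ) ^ (N * (2 * s - 2)) * 2 ^ N = (2 ^ N) ^ (2 * s - 1) := by
      rw [← pow_add, ← pow_mul, show 2 * s - 1 = 2 * s - 2 + 1 by omega, mul_add_one]
    rw [div_pow, ← this]
    field_simp
  have hexp_le := exp_le_sum_range_two_mul_add_one hy0 hy1 s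
  refine ⟨?_, ?_⟩
  · rw [← hexp x]
    exact pow_le_pow_left₀ (exp_pos _).le hexp_le _
  · rw [← hexp, hscale]
    exact pow_le_pow_left₀ ((exp_pos _).le.trans hexp_le)
      (sum_range_two_mul_add_one_le_exp_sub hy0 hy1 hs) _
end

section
/- For every real number t > 1, if log(t)/(t-1) - 1 - log(log(t)/(t-1)) ≤ 2 then log(t)/(t-1) - 1 - log(log(t)/(t-1)) ≥ 2(t-1)²/10⁴. -/
open Real

/-- Tangent-line upper bound for log. -/
lemma sg_log_le_tangent {x c : ℝ} (hx : 0 < x) (hc : 0 < c) :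
    Real.log x ≤ x / c - 1 + Real.log c := by
  have h := Real.log_le_sub_one_of_pos (show 0 < x / c by positivity)
  rw [Real.log_div (ne_of_gt hx) (ne_of_gt hc)] at h
  linarith

/-- log of the eighth root. -/
lemma sg_log_sqrt3 {x : ℝ} (hx : 0 ≤ x) :
    Real.log (Real.sqrt (Real.sqrt (Real.sqrt x))) = Real.log x / 8 := by
  rw [Real.log_sqrt (Real.sqrt_nonneg _), Real.log_sqrt (Real.sqrt_nonneg _),
    Real.log_sqrt hx]
  ring

/-- Eighth-root upper bound for log with a rational certificate. -/
lemma sg_log_le_eight {x q : ℝ} (hx : 0 < x) (hq0 : 0 ≤ q) (hq : x ≤ q ^ 8) :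
    Real.log x ≤ 8 * (q - 1) := by
  set w := Real.sqrt (Real.sqrt (Real.sqrt x)) with hw
  have hw0 : 0 < w := by
    rw [hw]
    simp [Real.sqrt_pos, hx]
  have hwq : w ≤ q := by
    have h1 : Real.sqrt x ≤ q ^ 4 := by
      rw [Real.sqrt_le_left (by positivity)]
      nlinarith
    have h2 : Real.sqrt (Real.sqrt x) ≤ q ^ 2 := by
      rw [Real.sqrt_le_left (by positivity)]
      nlinarith
    rw [hw, Real.sqrt_le_left hq0]
    nlinarith
  have hl : Real.log w ≤ w - 1 := Real.log_le_sub_one_of_pos hw0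
  have he : Real.log w = Real.log x / 8 := sg_log_sqrt3 hx.le
  linarith

/-- Eighth-root lower bound for log with a rational certificate. -/
lemma sg_eight_le_log {x q : ℝ} (hq0 : 0 < q) (hq : q ^ 8 ≤ x) :
    8 * (1 - 1 / q) ≤ Real.log x := by
  have hx : 0 < x := lt_of_lt_of_le (by positivity) hq
  set w := Real.sqrt (Real.sqrt (Real.sqrt x)) with hw
  have hqw : q ≤ w := by
    have h1 : q ^ 4 ≤ Real.sqrt x := by
      rw [Real.le_sqrt' (by positivity)]
      nlinarith
    have h2 : q ^ 2 ≤ Real.sqrt (Real.sqrt x) := by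
      rw [Real.le_sqrt' (by positivity)]
      nlinarith
    rw [hw, Real.le_sqrt' hq0]
    nlinarith
  have hw0 : 0 < w := lt_of_lt_of_le hq0 hqw
  have hl : 1 - 1 / w ≤ Real.log w := by
    have := Real.log_le_sub_one_of_pos (show 0 < 1 / w by positivity)
    rw [Real.log_div one_ne_zero (ne_of_gt hw0), Real.log_one] at this
    linarith
  have he : Real.log w = Real.log x / 8 := sg_log_sqrt3 hx.le
  have hinv : 1 / w ≤ 1 / q := one_div_le_one_div_of_le hq0 hqw
  linarith

/-- Decomposition of log using powers of two. -/
lemma sg_log_decomp (x : ℝ) (k : ℕ) (hx : 0 < x) :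
    Real.log x = k * Real.log 2 + Real.log (x / 2 ^ k) := by
  rw [Real.log_div (ne_of_gt hx) (by positivity), Real.log_pow]
  ring

/-- Monotonicity of `r ↦ r - 1 - log r` on `(0, 1]` (it is decreasing). -/
lemma sg_f_mono {r ρ : ℝ} (hr : 0 < r) (h1 : r ≤ ρ) (h2 : ρ ≤ 1) :
    ρ - 1 - Real.log ρ ≤ r - 1 - Real.log r := by
  have hρ : 0 < ρ := lt_of_lt_of_le hr h1
  have hdiv : Real.log r - Real.log ρ ≤ r / ρ - 1 := by
    have := Real.log_le_sub_one_of_pos (show 0 < r / ρ by positivity)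
    rw [Real.log_div (ne_of_gt hr) (ne_of_gt hρ)] at this
    linarith
  have key : r / ρ - 1 ≤ r - ρ := by
    rw [div_sub_one (ne_of_gt hρ), div_le_iff₀ hρ]
    nlinarith
  linarith

/-- A generic "slice" lemma: on `1 + a ≤ t ≤ 1 + b`, the secant gap is bounded
below using monotonicity and a tangent bound at `1 + a`. -/
lemma sg_slice {t a b ρ La : ℝ} (ha : 0 < a) (hab : a < b)
    (hta : 1 + a ≤ t) (htb : t ≤ 1 + b)
    (hLa : Real.log (1 + a) ≤ La) (hρ1 : ρ ≤ 1)
    (h1 : La ≤ ρ * a) (h2 : (b - a) / (1 + a) + La ≤ ρ * b)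
    (h3 : b ^ 2 / 5000 ≤ ρ - 1 - Real.log ρ) :
    2 * (t - 1) ^ 2 / 10 ^ 4
      ≤ Real.log t / (t - 1) - 1 - Real.log (Real.log t / (t - 1)) := by
  have hs : 0 < t - 1 := by linarith
  have ht1 : (1 : ℝ) < t := by linarith
  have hlt : 0 < Real.log t := Real.log_pos ht1
  have h1a : (0:ℝ) < 1 + a := by linarith
  have hne : (1:ℝ) + a ≠ 0 := ne_of_gt h1a
  set s := t - 1 with hsdef
  set r := Real.log t / s with hrdef
  have hr0 : 0 < r := by positivity
  have hsa : a ≤ s := by rw [hsdef]; linarith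
  have hsb : s ≤ b := by rw [hsdef]; linarith
  -- tangent bound : log t ≤ (s - a)/(1+a) + La
  have htan : Real.log t ≤ (s - a) / (1 + a) + La := by
    have h0 := sg_log_le_tangent (show (0:ℝ) < t by linarith) h1a
    have h' : t / (1 + a) - 1 = (s - a) / (1 + a) := by
      rw [hsdef]; field_simp; ring
    linarith [h0, h']
  -- remove division in h2
  have e2' : (b - a) + La * (1 + a) ≤ ρ * b * (1 + a) := by
    have h2' := mul_le_mul_of_nonneg_right h2 (le_of_lt h1a)
    rw [add_mul, div_mul_cancel₀ _ hne] at h2'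
    exact h2'
  -- linear interpolation: (s-a)/(1+a) + La ≤ ρ * s for a ≤ s ≤ b
  have hlin : (s - a) / (1 + a) + La ≤ ρ * s := by
    rw [div_add' _ _ _ hne, div_le_iff₀ h1a]
    have he1 : 0 ≤ ρ * a - La := by linarith
    have he2 : 0 ≤ ρ * b * (1 + a) - (b - a) - La * (1 + a) := by linarith
    nlinarith [mul_nonneg (mul_nonneg (sub_nonneg.2 hsb) (le_of_lt h1a)) he1,
      mul_nonneg (sub_nonneg.2 hsa) he2, hab]
  have hrρ : r ≤ ρ := by
    rw [hrdef, div_le_iff₀ hs]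
    exact le_trans htan hlin
  have hmono := sg_f_mono hr0 hrρ hρ1
  have hsq : s ^ 2 ≤ b ^ 2 := by nlinarith
  have hfin : 2 * s ^ 2 / 10 ^ 4 ≤ b ^ 2 / 5000 := by nlinarith
  linarith

set_option maxHeartbeats 1000000 in
/-- Quantitative lower bound in the proof of Theorem 4.1: for `t > 1`, if
`log t/(t-1) - 1 - log(log t/(t-1)) ≤ 2` then it is at least `2(t-1)²/10⁴`. -/
theorem secant_gap_lower_bound (t : ℝ) (ht : 1 < t)
    (h : Real.log t / (t - 1) - 1 - Real.log (Real.log t / (t - 1)) ≤ 2) :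
    2 * (t - 1) ^ 2 / 10 ^ 4
      ≤ Real.log t / (t - 1) - 1 - Real.log (Real.log t / (t - 1)) := by
  have hs : 0 < t - 1 := by linarith
  have hlt : 0 < Real.log t := Real.log_pos ht
  have hl2lb := Real.log_two_gt_d9
  have hl2ub := Real.log_two_lt_d9
  -- first : t ≤ 98
  have ht98 : t ≤ 98 := by
    by_contra hgt
    push_neg at hgt
    -- r ≤ 0.0475 for t ≥ 98
    have hz : Real.log ((98:ℝ) / 2 ^ 6) ≤ 8 * ((1.05475:ℝ) - 1) :=
      sg_log_le_eight (by norm_num) (by norm_num) (by norm_num)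
    have hL98 : Real.log 98 ≤ 4.5968830848 := by
      rw [sg_log_decomp 98 6 (by norm_num)]
      push_cast
      linarith
    have htan : Real.log t ≤ t / 98 - 1 + Real.log 98 :=
      sg_log_le_tangent (by linarith) (by norm_num)
    have hrρ : Real.log t / (t - 1) ≤ 0.0475 := by
      rw [div_le_iff₀ hs]
      linarith
    have hr0 : 0 < Real.log t / (t - 1) := by positivity
    have hmono := sg_f_mono hr0 hrρ (by norm_num)
    have hz2 : 8 * (1 - 1 / (1.0348:ℝ)) ≤ Real.log (((1:ℝ)/0.0475) / 2 ^ 4) :=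
      sg_eight_le_log (by norm_num) (by norm_num)
    have hlog : (3.0416:ℝ) ≤ Real.log ((1:ℝ) / 0.0475) := by
      rw [sg_log_decomp (1/0.0475) 4 (by norm_num)]
      push_cast
      linarith
    have heq : Real.log (0.0475:ℝ) = - Real.log ((1:ℝ)/0.0475) := by
      rw [Real.log_div one_ne_zero (by norm_num), Real.log_one]
      ring
    rw [heq] at hmono
    linarith
  -- small slice: t ≤ 1.5
  rcases le_or_gt t 1.5 with hcase | hcase
  · -- polynomial regime
    set s := t - 1 with hsdef
    have hs12 : s ≤ 1/2 := by rw [hsdef]; linarith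
    have hw := Real.sq_sqrt (show (0:ℝ) ≤ t by linarith)
    set w := Real.sqrt t with hwdef
    have hw0 : 0 ≤ w := Real.sqrt_nonneg t
    have hlw : Real.log t ≤ 2 * (w - 1) := by
      have h1 : Real.log w ≤ w - 1 := Real.log_le_sub_one_of_pos (by
        rw [hwdef]; simp only [Real.sqrt_pos]; linarith)
      have h2 : Real.log w = Real.log t / 2 := Real.log_sqrt (by linarith)
      linarith
    have hwub : w ≤ 1.25 := by nlinarith [hw]
    have hws : w ^ 2 - 1 = s := by rw [hw, hsdef]
    have hlogt : Real.log t ≤ s - s ^ 2 / 35 := by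
      have key : 2 * (w - 1) ≤ (w ^ 2 - 1) - (w ^ 2 - 1) ^ 2 / 35 := by
        nlinarith [sq_nonneg (w - 1),
          mul_nonneg (mul_nonneg (sub_nonneg.2 hwub) hw0) (sq_nonneg (w - 1))]
      nlinarith [key, hws]
    set r := Real.log t / s with hrdef
    have hr0 : 0 < r := by positivity
    have hr1 : r ≤ 1 := by
      rw [hrdef, div_le_one hs]
      exact Real.log_le_sub_one_of_pos (by linarith)
    have hur : r ≤ 1 - s / 35 := by
      rw [hrdef, div_le_iff₀ hs]
      nlinarith [hlogt]
    have hv := Real.sq_sqrt hr0.le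
    set v := Real.sqrt r with hvdef
    have hv0 : 0 ≤ v := Real.sqrt_nonneg r
    have hv1 : v ≤ 1 := by nlinarith [hv]
    have hlr : Real.log r ≤ 2 * (v - 1) := by
      have h1 : Real.log v ≤ v - 1 := Real.log_le_sub_one_of_pos (by
        rw [hvdef]; simp only [Real.sqrt_pos]; exact hr0)
      have h2 : Real.log v = Real.log r / 2 := Real.log_sqrt hr0.le
      linarith
    have hf : (1 - v) ^ 2 ≤ r - 1 - Real.log r := by nlinarith [hv]
    have h1v : (1 - r) / 2 ≤ 1 - v := by nlinarith [hv]
    have h1r : s / 35 ≤ 1 - r := by linarith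
    have hfin : 2 * s ^ 2 / 10 ^ 4 ≤ r - 1 - Real.log r := by
      have hsnn : 0 ≤ s / 35 := by positivity
      have hq1 : (s / 35) ^ 2 ≤ (1 - r) ^ 2 := by nlinarith
      have hq2 : ((1 - r) / 2) ^ 2 ≤ (1 - v) ^ 2 := by
        have h1rnn : 0 ≤ (1 - r) / 2 := by nlinarith
        nlinarith
      nlinarith [hq1, hq2, hf]
    exact hfin
  rcases le_or_gt t 6 with hcase2 | hcase2
  · -- slice [0.5, 5]
    have hL : Real.log (1 + (0.5:ℝ)) ≤ 0.416 := by
      have hz : Real.log ((1:ℝ) + 0.5) ≤ 8 * ((1.052:ℝ) - 1) :=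
        sg_log_le_eight (by norm_num) (by norm_num) (by norm_num)
      linarith
    have hz2 : 8 * (1 - 1 / (1.0232:ℝ)) ≤ Real.log (((1:ℝ)/0.832) / 2 ^ 0) :=
      sg_eight_le_log (by norm_num) (by norm_num)
    have hlog : (0.1813:ℝ) ≤ Real.log ((1:ℝ) / 0.832) := by
      rw [sg_log_decomp (1/0.832) 0 (by norm_num)]
      push_cast
      linarith
    have heq : Real.log (0.832:ℝ) = - Real.log ((1:ℝ)/0.832) := by
      rw [Real.log_div one_ne_zero (by norm_num), Real.log_one]; ring
    refine sg_slice (a := 0.5) (b := 5) (ρ := 0.832) (La := 0.416)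
      (by norm_num) (by norm_num) (by linarith) (by linarith) hL (by norm_num)
      (by norm_num) (by norm_num) ?_
    rw [heq]
    norm_num
    linarith
  rcases le_or_gt t 41 with hcase3 | hcase3
  · -- slice [5, 40]
    have hz : Real.log ((6:ℝ) / 2 ^ 2) ≤ 8 * ((1.052:ℝ) - 1) :=
      sg_log_le_eight (by norm_num) (by norm_num) (by norm_num)
    have hL : Real.log (1 + (5:ℝ)) ≤ 1.8022943616 := by
      rw [show (1:ℝ) + 5 = 6 by norm_num, sg_log_decomp 6 2 (by norm_num)]
      push_cast
      linarith
    have hz2 : 8 * (1 - 1 / (1.0417:ℝ)) ≤ Real.log (((1:ℝ)/0.3605) / 2 ^ 1) :=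
      sg_eight_le_log (by norm_num) (by norm_num)
    have hlog : (1.0133:ℝ) ≤ Real.log ((1:ℝ) / 0.3605) := by
      rw [sg_log_decomp (1/0.3605) 1 (by norm_num)]
      push_cast
      linarith
    have heq : Real.log (0.3605:ℝ) = - Real.log ((1:ℝ)/0.3605) := by
      rw [Real.log_div one_ne_zero (by norm_num), Real.log_one]; ring
    refine sg_slice (a := 5) (b := 40) (ρ := 0.3605) (La := 1.8022943616)
      (by norm_num) (by norm_num) (by linarith) (by linarith) hL (by norm_num)
      (by norm_num) (by norm_num) ?_
    rw [heq]
    norm_num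
    linarith
  rcases le_or_gt t 85 with hcase4 | hcase4
  · -- slice [40, 84]
    have hz : Real.log ((41:ℝ) / 2 ^ 5) ≤ 8 * ((1.0315:ℝ) - 1) :=
      sg_log_le_eight (by norm_num) (by norm_num) (by norm_num)
    have hL : Real.log (1 + (40:ℝ)) ≤ 3.717735904 := by
      rw [show (1:ℝ) + 40 = 41 by norm_num, sg_log_decomp 41 5 (by norm_num)]
      push_cast
      linarith
    have hz2 : 8 * (1 - 1 / (1.0376:ℝ)) ≤ Real.log (((1:ℝ)/0.093) / 2 ^ 3) :=
      sg_eight_le_log (by norm_num) (by norm_num)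
    have hlog : (2.3693:ℝ) ≤ Real.log ((1:ℝ) / 0.093) := by
      rw [sg_log_decomp (1/0.093) 3 (by norm_num)]
      push_cast
      linarith
    have heq : Real.log (0.093:ℝ) = - Real.log ((1:ℝ)/0.093) := by
      rw [Real.log_div one_ne_zero (by norm_num), Real.log_one]; ring
    refine sg_slice (a := 40) (b := 84) (ρ := 0.093) (La := 3.717735904)
      (by norm_num) (by norm_num) (by linarith) (by linarith) hL (by norm_num)
      (by norm_num) (by norm_num) ?_
    rw [heq]
    norm_num
    linarith
  · -- slice [84, 97]
    have hz : Real.log ((85:ℝ) / 2 ^ 6) ≤ 8 * ((1.0362:ℝ) - 1) :=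
      sg_log_le_eight (by norm_num) (by norm_num) (by norm_num)
    have hL : Real.log (1 + (84:ℝ)) ≤ 4.4484830848 := by
      rw [show (1:ℝ) + 84 = 85 by norm_num, sg_log_decomp 85 6 (by norm_num)]
      push_cast
      linarith
    have hz2 : 8 * (1 - 1 / (1.0206:ℝ)) ≤ Real.log (((1:ℝ)/0.053) / 2 ^ 4) :=
      sg_eight_le_log (by norm_num) (by norm_num)
    have hlog : (2.934:ℝ) ≤ Real.log ((1:ℝ) / 0.053) := by
      rw [sg_log_decomp (1/0.053) 4 (by norm_num)]
      push_cast
      linarith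
    have heq : Real.log (0.053:ℝ) = - Real.log ((1:ℝ)/0.053) := by
      rw [Real.log_div one_ne_zero (by norm_num), Real.log_one]; ring
    refine sg_slice (a := 84) (b := 97) (ρ := 0.053) (La := 4.4484830848)
      (by norm_num) (by norm_num) (by linarith) (by linarith) hL (by norm_num)
      (by norm_num) (by norm_num) ?_
    rw [heq]
    norm_num
    linarith
end

section
/- Let 0 < a < b be real numbers and set t = b/a and D = log(t)/(t-1) - 1 - log(log(t)/(t-1)). Then for every x ∈ [a, b], min(log a + (x-a)/a, log b + (x-b)/b) - log x ≤ D, and equality holds at x* = a·b·log(b/a)/(b-a), which lies in [a, b]. -/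
set_option maxHeartbeats 1000000


/-- Distance computation in the proof of Theorem 5.1: for `0 < a < b`, with `t = b/a`
and `D = log t/(t-1) - 1 - log(log t/(t-1))`, the pointwise minimum of the two tangent
lines to `log` at `a` and `b` exceeds `log x` by at most `D` on `[a, b]`, with equality
at `x* = a b log(b/a)/(b-a) ∈ [a, b]`. -/
theorem tangent_outer_approx_gap (a b : ℝ) (ha : 0 < a) (hab : a < b) :
    (∀ x ∈ Set.Icc a b,
        min (Real.log a + (x - a) / a) (Real.log b + (x - b) / b) - Real.log x
          ≤ Real.log (b / a) / (b / a - 1) - 1 - Real.log (Real.log (b / a) / (b / a - 1))) ∧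
    a * b * Real.log (b / a) / (b - a) ∈ Set.Icc a b ∧
    min (Real.log a + (a * b * Real.log (b / a) / (b - a) - a) / a)
          (Real.log b + (a * b * Real.log (b / a) / (b - a) - b) / b)
        - Real.log (a * b * Real.log (b / a) / (b - a))
      = Real.log (b / a) / (b / a - 1) - 1 - Real.log (Real.log (b / a) / (b / a - 1)) := by
  have hb : 0 < b := ha.trans hab
  set t := b / a with ht_def
  have ht1 : 1 < t := (one_lt_div ha).2 hab
  have ht0 : 0 < t := by linarith
  set L := Real.log t with hL_def
  have hL : 0 < L := Real.log_pos ht1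
  have htm1 : 0 < t - 1 := by linarith
  set s := L / (t - 1) with hs_def
  have hs0 : 0 < s := div_pos hL htm1
  have hts : t * s = L + s := by
    rw [hs_def]; field_simp; ring
  have hbat : b = a * t := by rw [ht_def]; field_simp
  have hxstar : a * b * L / (b - a) = a * (t * s) := by
    rw [hs_def, ht_def]
    have hba : b - a ≠ 0 := by linarith
    field_simp
  rw [hxstar]
  set c := a * (t * s) with hc_def
  have hc0 : 0 < c := by positivity
  have hlogb : Real.log b = Real.log a + L := by
    rw [hL_def, ht_def, Real.log_div hb.ne' ha.ne']; ring
  have hlogc : Real.log c = Real.log a + L + Real.log s := by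
    rw [hc_def, Real.log_mul ha.ne' (by positivity),
      Real.log_mul ht0.ne' hs0.ne']
    ring
  have h1 : (c - a) / a = t * s - 1 := by
    rw [hc_def]; field_simp
  have h2 : (c - b) / b = s - 1 := by
    rw [hc_def, hbat]; field_simp
  have hDa : Real.log a + (c - a) / a - Real.log c = s - 1 - Real.log s := by
    rw [h1, hlogc]; linarith [hts]
  have hDb : Real.log b + (c - b) / b - Real.log c = s - 1 - Real.log s := by
    rw [h2, hlogc, hlogb]; ring
  have hmemb : c ∈ Set.Icc a b := by
    constructor
    · -- a ≤ c ⟺ 1 ≤ t*s, using log t ≥ 1 - 1/t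
      have hinv := Real.log_le_sub_one_of_pos (show (0:ℝ) < t⁻¹ by positivity)
      rw [Real.log_inv, ← hL_def] at hinv
      have htinv : t * t⁻¹ = 1 := mul_inv_cancel₀ ht0.ne'
      have hlow : t - 1 ≤ t * L := by nlinarith
      have hts1 : 1 ≤ t * s := by
        rw [hs_def, mul_div_assoc']
        exact (one_le_div htm1).2 hlow
      nlinarith
    · -- c ≤ b ⟺ s ≤ 1, using log t ≤ t - 1
      have hup : L ≤ t - 1 := by
        rw [hL_def]; exact Real.log_le_sub_one_of_pos ht0
      have hs1 : s ≤ 1 := by rw [hs_def]; exact (div_le_one htm1).2 hup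
      rw [hbat]; nlinarith
  clear_value c s L t
  refine ⟨?_, hmemb, ?_⟩
  · intro x hx
    obtain ⟨hax, hxb⟩ := hx
    have hx0 : 0 < x := ha.trans_le hax
    rcases le_total x c with hxc | hcx
    · -- use first tangent
      have hmin := min_le_left (Real.log a + (x - a) / a) (Real.log b + (x - b) / b)
      have hlog : Real.log c - Real.log x ≤ (c - x) / a := by
        have e1 : Real.log c - Real.log x = Real.log (c / x) := by
          rw [Real.log_div hc0.ne' hx0.ne']
        have e2 : Real.log (c / x) ≤ c / x - 1 :=
          Real.log_le_sub_one_of_pos (by positivity)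
        have e3 : c / x - 1 = (c - x) / x := by field_simp
        have e4 : (c - x) / x ≤ (c - x) / a := by
          apply div_le_div_of_nonneg_left (by linarith) ha hax
        linarith
      have key : Real.log a + (x - a) / a - Real.log x ≤ s - 1 - Real.log s := by
        have e5 : (x - a) / a - (c - a) / a = (x - c) / a := by ring
        have e6 : (x - c) / a = -((c - x) / a) := by ring
        linarith [hDa]
      linarith
    · -- use second tangent
      have hmin := min_le_right (Real.log a + (x - a) / a) (Real.log b + (x - b) / b)
      have hlog : Real.log c - Real.log x ≤ (c - x) / b := by
        have e1 : Real.log c - Real.log x = Real.log (c / x) := by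
          rw [Real.log_div hc0.ne' hx0.ne']
        have e2 : Real.log (c / x) ≤ c / x - 1 :=
          Real.log_le_sub_one_of_pos (by positivity)
        have e3 : c / x - 1 = (c - x) / x := by field_simp
        have e4 : (c - x) / x ≤ (c - x) / b := by
          rw [div_le_div_iff₀ hx0 hb]
          nlinarith
        linarith
      have key : Real.log b + (x - b) / b - Real.log x ≤ s - 1 - Real.log s := by
        have e5 : (x - b) / b - (c - b) / b = -((c - x) / b) := by ring
        linarith [hDb]
      linarith
  · have heq : Real.log a + (c - a) / a = Real.log b + (c - b) / b := by
      linarith [hDa, hDb]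
    rw [heq, min_self]
    linarith [hDb]
end

section
/- For every real number t > 1, log(t)/(t-1) - 1 - log(log(t)/(t-1)) ≤ (t-1)²/8. -/
/-!
Write `s = log t / (t - 1)` for the secant slope of `log` on `[1, t]`; the left-hand side is
`f s` with `f u = u - 1 - log u`, which decreases on `(0, 1]`. Since `2 / (t + 1) ≤ s ≤ 1`
(the Padé bound `2 (t - 1) / (t + 1) ≤ log t` and `log t ≤ t - 1`), we get `f s ≤ f (2 / (t + 1))`, and with `y = (t + 1) / 2` the bound `log y ≤ sinh (log y)`
gives `f (y⁻¹) ≤ (y + y⁻¹) / 2 - 1 = (y - 1)² / (2 y) ≤ (y - 1)² / 2 = (t - 1)² / 8`.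
-/

open Real Set

namespace Real

lemma log_le_sub_inv_div_two {y : ℝ} (hy : 1 ≤ y) : log y ≤ (y - y⁻¹) / 2 := by
  rw [← sinh_log (by linarith)]
  exact self_le_sinh_iff.mpr (log_nonneg hy)

lemma antitoneOn_sub_one_sub_log : AntitoneOn (fun u : ℝ ↦ u - 1 - log u) (Ioc 0 1) := by
  rintro a ⟨ha, -⟩ b ⟨hb, hb1⟩ hab
  have hlog : 1 - a / b ≤ log b - log a := by
    simpa [log_div hb.ne' ha.ne'] using one_sub_inv_le_log_of_pos (div_pos hb ha)
  have hdiv : b - a ≤ (b - a) / b := le_div_self (by linarith) hb hb1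
  have : (b - a) / b = 1 - a / b := by field_simp
  show b - 1 - log b ≤ a - 1 - log a
  linarith

lemma inv_sub_one_sub_log_inv_le {y : ℝ} (hy : 1 ≤ y) :
    y⁻¹ - 1 - log y⁻¹ ≤ (y - 1) ^ 2 / 2 := by
  have hy0 : 0 < y := by linarith
  have hsq : (y + y⁻¹) / 2 - 1 = (y - 1) ^ 2 / (2 * y) := by field_simp; ring
  calc y⁻¹ - 1 - log y⁻¹ = y⁻¹ - 1 + log y := by rw [log_inv]; ring
    _ ≤ (y + y⁻¹) / 2 - 1 := by linarith [log_le_sub_inv_div_two hy]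
    _ = (y - 1) ^ 2 / (2 * y) := hsq
    _ ≤ (y - 1) ^ 2 / 2 := by gcongr; linarith

lemma two_div_add_one_le_log_div_sub_one {t : ℝ} (ht : 1 < t) :
    2 / (t + 1) ≤ log t / (t - 1) := by
  have h := le_log_one_add_of_nonneg (sub_nonneg.mpr ht.le)
  rw [add_sub_cancel, show t - 1 + 2 = t + 1 by ring] at h
  rwa [le_div_iff₀ (by linarith), div_mul_eq_mul_div]

lemma log_div_sub_one_le_one {t : ℝ} (ht : 1 < t) : log t / (t - 1) ≤ 1 :=
  (div_le_one (by linarith)).mpr (log_le_sub_one_of_pos (by linarith))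

end Real

/-- Key inequality in the proof of Theorem 5.1: for `t > 1`,
`log t/(t-1) - 1 - log(log t/(t-1)) ≤ (t-1)²/8`. -/
theorem secant_gap_upper_bound (t : ℝ) (ht : 1 < t) :
    Real.log t / (t - 1) - 1 - Real.log (Real.log t / (t - 1)) ≤ (t - 1) ^ 2 / 8 := by
  have hy : 1 ≤ (t + 1) / 2 := by linarith
  have hslope := two_div_add_one_le_log_div_sub_one ht
  have hslope_le := log_div_sub_one_le_one ht
  have hpos : (0 : ℝ) < 2 / (t + 1) := by positivity
  calc log t / (t - 1) - 1 - log (log t / (t - 1))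
      ≤ 2 / (t + 1) - 1 - log (2 / (t + 1)) :=
        antitoneOn_sub_one_sub_log ⟨hpos, hslope.trans hslope_le⟩
          ⟨hpos.trans_le hslope, hslope_le⟩ hslope
    _ = ((t + 1) / 2)⁻¹ - 1 - log ((t + 1) / 2)⁻¹ := by rw [inv_div]
    _ ≤ ((t + 1) / 2 - 1) ^ 2 / 2 := inv_sub_one_sub_log_inv_le hy
    _ = (t - 1) ^ 2 / 8 := by ring
end
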